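/- Let Σ = V(θ₀) ∈ PDS(k) with V linear, L full column rank, E = (Σ^{-1/2} ⊗ Σ^{-1/2}) L, and suppose vec(Σ) = Lθ₀. Then (EᵀE)⁻¹ Eᵀ vec(I_k) = θ₀; consequently, for scalars a, b with γ₁ ≠ 0 and γ₁ − kγ₂ ≠ 0, the matrix Λ = γ₁ Lᵀ(Σ⁻¹⊗Σ⁻¹)L − γ₂ Lᵀ vec(Σ⁻¹) vec(Σ⁻¹)ᵀ L has inverse Λ⁻¹ = (1/γ₁)(Lᵀ(Σ⁻¹⊗Σ⁻¹)L)⁻¹ + (γ₂/(γ₁(γ₁−kγ₂))) θ₀θ₀ᵀ. -/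

import Mathlib

/-!
With `A = Lᵀ(Σ⁻¹ ⊗ Σ⁻¹)L`, the only facts needed are `EᵀE = A` and
`Eᵀ vec(I) = Lᵀ vec(Σ⁻¹) = Lᵀ(Σ⁻¹ ⊗ Σ⁻¹) vec(Σ) = Aθ₀`; these hold for `E = (W⁻¹ ⊗ W⁻¹)L` with any
factorisation `WWᵀ = Σ`, not only the symmetric square root. As `L` is injective, `A` is positive
definite, so the least-squares coefficient is `A⁻¹Aθ₀ = θ₀`. The same identity makes the
correction term of `Λ` the rank-one matrix `(Aθ₀)(Aθ₀)ᵀ`, and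
`θ₀ᵀAθ₀ = vec(Σ)ᵀ vec(Σ⁻¹) = tr(ΣΣ⁻¹) = k`, so `Λ⁻¹` is given by the Sherman–Morrison formula.
-/

open Matrix
open scoped Kronecker

/-- `vecm M` stacks the columns of `M` into a vector: `vecm M (j, i) = M i j`. -/
def vecm {k : ℕ} (M : Matrix (Fin k) (Fin k) ℝ) : Fin k × Fin k → ℝ :=
  fun p => M p.2 p.1

open scoped ComplexOrder in
/-- The square root of a positive semidefinite matrix, as `Matrix.PosSemidef.sqrt` was defined
in the older Mathlib (removed since). -/
noncomputable def Matrix.PosSemidef.sqrt {n : Type*} [Fintype n] [DecidableEq n] {𝕜 : Type*}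
    [RCLike 𝕜] {A : Matrix n n 𝕜} (hA : A.PosSemidef) : Matrix n n 𝕜 :=
  hA.1.eigenvectorUnitary.1 * diagonal ((↑) ∘ (√·) ∘ hA.1.eigenvalues) *
    (star hA.1.eigenvectorUnitary : Matrix n n 𝕜)

open scoped ComplexOrder

namespace Matrix.PosSemidef

variable {n 𝕜 : Type*} [Fintype n] [DecidableEq n] [RCLike 𝕜] {A : Matrix n n 𝕜}

lemma sqrt_mul_self (hA : A.PosSemidef) : hA.sqrt * hA.sqrt = A := by
  have hU : (star hA.1.eigenvectorUnitary : Matrix n n 𝕜) * hA.1.eigenvectorUnitary = 1 :=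
    Unitary.coe_star_mul_self _
  conv_rhs => rw [hA.1.spectral_theorem, Unitary.conjStarAlgAut_apply]
  simp only [sqrt, Matrix.mul_assoc]
  rw [← Matrix.mul_assoc (star _) (hA.1.eigenvectorUnitary : Matrix n n 𝕜), hU, Matrix.one_mul,
    ← Matrix.mul_assoc (diagonal _), diagonal_mul_diagonal]
  congr 3
  funext i
  simp [← RCLike.ofReal_mul, Real.mul_self_sqrt (hA.eigenvalues_nonneg i)]

lemma isHermitian_sqrt (hA : A.PosSemidef) : hA.sqrt.IsHermitian := by
  have hD : star (((↑) : ℝ → 𝕜) ∘ (√·) ∘ hA.1.eigenvalues) = (↑) ∘ (√·) ∘ hA.1.eigenvalues :=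
    funext fun _ => RCLike.conj_ofReal _
  simp only [IsHermitian, sqrt, star_eq_conjTranspose, conjTranspose_mul,
    conjTranspose_conjTranspose, diagonal_conjTranspose, hD, Matrix.mul_assoc]

end Matrix.PosSemidef

lemma vecm_eq_vec {k : ℕ} (M : Matrix (Fin k) (Fin k) ℝ) : vecm M = M.vec := rfl

namespace Matrix

lemma mulVec_injective_of_rank_eq_card {m n K : Type*} [Field K] [Fintype n]
    {M : Matrix m n K} (h : M.rank = Fintype.card n) : Function.Injective M.mulVec :=
  mulVec_injective_iff.mpr <| linearIndependent_iff_card_eq_finrank_span.mpr <|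
    h.symm.trans M.rank_eq_finrank_span_cols

section ShermanMorrison

variable {n K : Type*} [Fintype n] [DecidableEq n] [Field K]

theorem inv_smul_sub_smul_vecMulVec {A : Matrix n n K} (hA : IsUnit A.det) (θ : n → K)
    {γ₁ γ₂ : K} (h₁ : γ₁ ≠ 0) (h₂ : γ₁ - (θ ⬝ᵥ A *ᵥ θ) * γ₂ ≠ 0) :
    (γ₁ • A - γ₂ • vecMulVec (A *ᵥ θ) (θ ᵥ* A))⁻¹ =
      γ₁⁻¹ • A⁻¹ + (γ₂ / (γ₁ * (γ₁ - (θ ⬝ᵥ A *ᵥ θ) * γ₂))) • vecMulVec θ θ := by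
  set c := θ ⬝ᵥ A *ᵥ θ
  apply inv_eq_right_inv
  have hAθθ : A * vecMulVec θ θ = vecMulVec (A *ᵥ θ) θ := mul_vecMulVec _ _ _
  have hθA : vecMulVec (A *ᵥ θ) (θ ᵥ* A) * A⁻¹ = vecMulVec (A *ᵥ θ) θ := by
    rw [vecMulVec_mul, vecMul_vecMul, mul_nonsing_inv _ hA, vecMul_one]
  have hrankOne : vecMulVec (A *ᵥ θ) (θ ᵥ* A) * vecMulVec θ θ = c • vecMulVec (A *ᵥ θ) θ := by
    rw [vecMulVec_mul_vecMulVec, vecMulVec_smul, ← dotProduct_mulVec]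
  simp only [sub_mul, mul_add, Matrix.smul_mul, Matrix.mul_smul]
  rw [hAθθ, hθA, hrankOne, mul_nonsing_inv _ hA]
  match_scalars
  · field_simp
  · have hcancel : γ₂ / (γ₁ * (γ₁ - c * γ₂)) * (γ₁ - c * γ₂) = γ₂ / γ₁ := by
      rw [div_mul_eq_mul_div, mul_div_mul_right _ _ h₂]
    linear_combination hcancel

end ShermanMorrison

section Vectorization

variable {m n R : Type*} [Fintype n] [DecidableEq n] [CommRing R]

lemma transpose_kronecker_inv_mul_self (W : Matrix n n R) :
    (W⁻¹ ⊗ₖ W⁻¹)ᵀ * (W⁻¹ ⊗ₖ W⁻¹) = (W * Wᵀ)⁻¹ ⊗ₖ (W * Wᵀ)⁻¹ := by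
  rw [← kroneckerMap_transpose, ← mul_kronecker_mul, mul_inv_rev, transpose_nonsing_inv]

lemma transpose_kronecker_inv_mulVec_vec_one (W : Matrix n n R) :
    (W⁻¹ ⊗ₖ W⁻¹)ᵀ *ᵥ (1 : Matrix n n R).vec = ((W * Wᵀ)⁻¹).vec := by
  rw [← kroneckerMap_transpose, kronecker_mulVec_vec, Matrix.mul_one, transpose_transpose,
    mul_inv_rev, transpose_nonsing_inv]

variable {S : Matrix n n R}

lemma kronecker_inv_mulVec_vec_self (hS : S.IsSymm) (hdet : IsUnit S.det) :
    (S⁻¹ ⊗ₖ S⁻¹) *ᵥ S.vec = S⁻¹.vec := by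
  rw [kronecker_mulVec_vec, transpose_nonsing_inv, hS.eq, nonsing_inv_mul _ hdet, Matrix.one_mul]

variable [Fintype m] {L : Matrix (n × n) m R} {θ : m → R}

lemma transpose_mulVec_vec_inv (hS : S.IsSymm) (hdet : IsUnit S.det) (hvec : S.vec = L *ᵥ θ) :
    Lᵀ *ᵥ S⁻¹.vec = (Lᵀ * (S⁻¹ ⊗ₖ S⁻¹) * L) *ᵥ θ := by
  rw [← kronecker_inv_mulVec_vec_self hS hdet, hvec, mulVec_mulVec, mulVec_mulVec]

lemma dotProduct_mulVec_eq_card (hS : S.IsSymm) (hdet : IsUnit S.det) (hvec : S.vec = L *ᵥ θ) :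
    θ ⬝ᵥ (Lᵀ * (S⁻¹ ⊗ₖ S⁻¹) * L) *ᵥ θ = Fintype.card n := by
  rw [← transpose_mulVec_vec_inv hS hdet hvec, dotProduct_mulVec, vecMul_transpose, ← hvec,
    vec_dotProduct_vec, hS.eq, mul_nonsing_inv _ hdet, trace_one]

end Vectorization

end Matrix

/-- With `E = (Σ^{-1/2} ⊗ Σ^{-1/2}) L` one has `(EᵀE)⁻¹Eᵀ vec(I) = θ₀`, and for
`γ₁ ≠ 0`, `γ₁ - kγ₂ ≠ 0`, the matrix
`Λ = γ₁ Lᵀ(Σ⁻¹⊗Σ⁻¹)L - γ₂ Lᵀ vec(Σ⁻¹) vec(Σ⁻¹)ᵀ L` has inverse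
`Λ⁻¹ = (1/γ₁)(Lᵀ(Σ⁻¹⊗Σ⁻¹)L)⁻¹ + (γ₂/(γ₁(γ₁-kγ₂))) θ₀θ₀ᵀ`. -/
theorem Lambda_inverse {k l : ℕ}
    (S : Matrix (Fin k) (Fin k) ℝ) (hS : S.PosDef)
    (θ₀ : Fin l → ℝ)
    (L : Matrix (Fin k × Fin k) (Fin l) ℝ)
    (hvec : vecm S = L.mulVec θ₀)
    (hrank : L.rank = l)
    (γ₁ γ₂ : ℝ) (h1 : γ₁ ≠ 0) (h2 : γ₁ - k * γ₂ ≠ 0) :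
    (((((PosSemidef.sqrt hS.posSemidef)⁻¹ ⊗ₖ (PosSemidef.sqrt hS.posSemidef)⁻¹) * L)ᵀ *
          (((PosSemidef.sqrt hS.posSemidef)⁻¹ ⊗ₖ (PosSemidef.sqrt hS.posSemidef)⁻¹) * L))⁻¹ *
        (((PosSemidef.sqrt hS.posSemidef)⁻¹ ⊗ₖ (PosSemidef.sqrt hS.posSemidef)⁻¹) * L)ᵀ).mulVec
        (vecm (1 : Matrix (Fin k) (Fin k) ℝ)) = θ₀ ∧
    (γ₁ • (Lᵀ * (S⁻¹ ⊗ₖ S⁻¹) * L)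
        - γ₂ • (Lᵀ * vecMulVec (vecm S⁻¹) (vecm S⁻¹) * L))⁻¹
      = γ₁⁻¹ • (Lᵀ * (S⁻¹ ⊗ₖ S⁻¹) * L)⁻¹
          + (γ₂ / (γ₁ * (γ₁ - k * γ₂))) • vecMulVec θ₀ θ₀ := by
  simp only [vecm_eq_vec] at hvec ⊢
  set W := PosSemidef.sqrt hS.posSemidef
  have hW : W * Wᵀ = S := by
    rw [← conjTranspose_eq_transpose_of_trivial, (PosSemidef.isHermitian_sqrt _).eq,
      PosSemidef.sqrt_mul_self]
  have hSymm : S.IsSymm := isHermitian_iff_isSymm.mp hS.isHermitian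
  have hdet : IsUnit S.det := (isUnit_iff_isUnit_det S).mp hS.isUnit
  set A := Lᵀ * (S⁻¹ ⊗ₖ S⁻¹) * L
  have hA : A.PosDef := by
    simpa only [conjTranspose_eq_transpose_of_trivial] using
      (hS.inv.kronecker hS.inv).conjTranspose_mul_mul_same
        (mulVec_injective_of_rank_eq_card (hrank.trans (Fintype.card_fin l).symm))
  have hAdet : IsUnit A.det := (isUnit_iff_isUnit_det A).mp hA.isUnit
  have hAθ : Lᵀ *ᵥ S⁻¹.vec = A *ᵥ θ₀ := transpose_mulVec_vec_inv hSymm hdet hvec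
  have hk : θ₀ ⬝ᵥ A *ᵥ θ₀ = k := by
    simpa only [Fintype.card_fin] using dotProduct_mulVec_eq_card hSymm hdet hvec
  constructor
  · have hE : (W⁻¹ ⊗ₖ W⁻¹ * L)ᵀ * (W⁻¹ ⊗ₖ W⁻¹ * L) = A := by
      rw [transpose_mul, Matrix.mul_assoc, ← Matrix.mul_assoc (W⁻¹ ⊗ₖ W⁻¹)ᵀ,
        transpose_kronecker_inv_mul_self, hW, ← Matrix.mul_assoc]
    rw [hE, ← mulVec_mulVec, transpose_mul, ← mulVec_mulVec,
      transpose_kronecker_inv_mulVec_vec_one, hW, hAθ, mulVec_mulVec, nonsing_inv_mul _ hAdet,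
      one_mulVec]
  · have hrankOne : Lᵀ * vecMulVec S⁻¹.vec S⁻¹.vec * L = vecMulVec (A *ᵥ θ₀) (θ₀ ᵥ* A) := by
      rw [mul_vecMulVec, vecMulVec_mul, ← mulVec_transpose, hAθ, ← mulVec_transpose,
        isHermitian_iff_isSymm.mp hA.isHermitian]
    rw [hrankOne, inv_smul_sub_smul_vecMulVec hAdet θ₀ h1 (by rwa [hk]), hk]
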